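/- (Transition probability recurrence, duplication case) Let 0 < p, q < 1 with p + q < 1 (or just p, q ∈ (0,1)), κ > 0, and define w(m|n) = ∑_{s=0}^{min(n,m)} C(κ+m-1, m-s)(1-q)^{κ+s} q^{m-s} C(n,s) p^{n-s}(1-p)^s. Then w(m|0) = C(κ+m-1, m)(1-q)^κ q^m, and for n > 0: w(m|n) = p·w(m|n-1) + [m>0]·(1-p-q)·w(m-1|n-1) + [m>0]·q·w(m-1|n). -/

import Mathlib

/-- Generalized binomial coefficient `C(θ, k) = θ(θ-1)⋯(θ-k+1)/k!`. -/
noncomputable def gbc (θ : ℝ) (k : ℕ) : ℝ :=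
  (∏ i ∈ Finset.range k, (θ - i)) / (Nat.factorial k)

/-- Transition probability `w(m|n)` of the gain-loss-duplication model. -/
noncomputable def w (p q κ : ℝ) (m n : ℕ) : ℝ :=
  ∑ s ∈ Finset.range (min n m + 1),
    gbc (κ + m - 1) (m - s) * (1 - q) ^ (κ + s) * q ^ (m - s) *
      (Nat.choose n s) * p ^ (n - s) * (1 - p) ^ s

lemma gbc_zero (θ : ℝ) : gbc θ 0 = 1 := by simp [gbc]

lemma gbc_pascal (θ : ℝ) (k : ℕ) :
    gbc (θ + 1) (k + 1) = gbc θ (k + 1) + gbc θ k := by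
  have h1 : ∀ j : ℕ, (∏ i ∈ Finset.range (j + 1), (θ + 1 - i))
      = (θ + 1) * ∏ i ∈ Finset.range j, (θ - i) := by
    intro j
    rw [Finset.prod_range_succ']
    simp only [Nat.cast_zero, sub_zero]
    rw [mul_comm]
    congr 1
    exact Finset.prod_congr rfl fun i _ => by push_cast; ring
  have h2 : (∏ i ∈ Finset.range (k + 1), (θ - i))
      = (∏ i ∈ Finset.range k, (θ - i)) * (θ - k) := Finset.prod_range_succ _ _
  have hfac : (Nat.factorial (k+1) : ℝ) = (k+1) * Nat.factorial k := by
    push_cast [Nat.factorial_succ]; ring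
  have hk : (Nat.factorial k : ℝ) ≠ 0 := Nat.cast_ne_zero.2 (Nat.factorial_ne_zero k)
  have hk1 : (Nat.factorial (k+1) : ℝ) ≠ 0 := Nat.cast_ne_zero.2 (Nat.factorial_ne_zero _)
  unfold gbc
  rw [h1, h2, hfac]
  field_simp [gbc, h1, h2, hfac]
  ring

noncomputable def AA (q κ : ℝ) (m s : ℕ) : ℝ :=
  if s ≤ m then gbc (κ + m - 1) (m - s) * (1 - q) ^ (κ + s) * q ^ (m - s) else 0

noncomputable def BB (p : ℝ) (n s : ℕ) : ℝ :=
  (Nat.choose n s : ℝ) * p ^ (n - s) * (1 - p) ^ s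

lemma BB_zero (p : ℝ) {n s : ℕ} (h : n < s) : BB p n s = 0 := by
  simp [BB, Nat.choose_eq_zero_of_lt h]

lemma BB_rec0 (p : ℝ) (n : ℕ) : BB p (n + 1) 0 = p * BB p n 0 := by
  simp [BB, pow_succ]; ring

lemma BB_rec (p : ℝ) (n s : ℕ) :
    BB p (n + 1) (s + 1) = p * BB p n (s + 1) + (1 - p) * BB p n s := by
  rcases lt_trichotomy s n with h | h | h
  · have h1 : n - s = (n - (s + 1)) + 1 := by omega
    have h2 : (n + 1) - (s + 1) = (n - (s+1)) + 1 := by omega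
    simp only [BB, Nat.choose_succ_succ, h1, h2]
    push_cast
    ring
  · subst h
    simp [BB, Nat.choose_succ_self, Nat.choose_self, pow_succ]
    ring
  · have h1 : n + 1 < s + 1 := by omega
    rw [BB_zero p h1, BB_zero p (by omega : n < s + 1), BB_zero p h]
    ring

lemma AA_rec (q κ : ℝ) (hq1 : q < 1) (m s : ℕ) :
    AA q κ (m + 1) (s + 1) = q * AA q κ m (s + 1) + (1 - q) * AA q κ m s := by
  have hq : (1 : ℝ) - q ≠ 0 := by linarith
  have hpow : ∀ t : ℕ, (1 - q) ^ (κ + (t + 1 : ℕ)) = (1 - q) ^ (κ + t) * (1 - q) := by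
    intro t
    rw [show κ + ((t : ℕ) + 1 : ℕ) = (κ + t) + 1 by push_cast; ring]
    exact Real.rpow_add_one hq _
  rcases lt_trichotomy s m with h | h | h
  · have hs1 : s + 1 ≤ m := h
    rw [AA, AA, AA, if_pos (by omega : s + 1 ≤ m + 1), if_pos hs1, if_pos (le_of_lt h)]
    have e1 : (m + 1) - (s + 1) = (m - (s + 1)) + 1 := by omega
    have e2 : m - s = (m - (s + 1)) + 1 := by omega
    have e3 : κ + (↑(m + 1) : ℝ) - 1 = (κ + ↑m - 1) + 1 := by push_cast; ring
    rw [e1, e2, e3, gbc_pascal, hpow s, pow_succ]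
    ring
  · subst h
    rw [AA, AA, AA, if_pos (le_refl (s+1)), if_neg (by omega), if_pos (le_refl s)]
    simp only [Nat.sub_self, gbc_zero, pow_zero]
    rw [hpow s]
    ring
  · rw [AA, AA, AA, if_neg (by omega), if_neg (by omega), if_neg (by omega)]
    ring

lemma w_eq (p q κ : ℝ) (m n N : ℕ) (hN : n ≤ N) :
    w p q κ m n = ∑ s ∈ Finset.range (N + 1), AA q κ m s * BB p n s := by
  rw [w]
  rw [show (∑ s ∈ Finset.range (min n m + 1),
      gbc (κ + m - 1) (m - s) * (1 - q) ^ (κ + s) * q ^ (m - s) *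
        (Nat.choose n s) * p ^ (n - s) * (1 - p) ^ s)
      = ∑ s ∈ Finset.range (min n m + 1), AA q κ m s * BB p n s from
    Finset.sum_congr rfl fun s hs => by
      have hsm : s ≤ m := by
        have := Finset.mem_range.1 hs; omega
      rw [AA, if_pos hsm, BB]; ring]
  apply Finset.sum_subset
  · intro x hx
    simp only [Finset.mem_range] at *
    omega
  · intro x hx hx'
    simp only [Finset.mem_range] at hx hx'
    by_cases hxn : n < x
    · rw [BB_zero p hxn]; ring
    · have hxm : m < x := by omega
      rw [AA, if_neg (by omega)]; ring

lemma key (p q κ : ℝ) (hq1 : q < 1) (m n : ℕ) :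
    ∑ s ∈ Finset.range (n + 1 + 1), AA q κ (m+1) s * BB p (n+1) s
    = p * ∑ s ∈ Finset.range (n + 1 + 1), AA q κ (m+1) s * BB p n s
      + (1 - p - q) * ∑ s ∈ Finset.range (n + 1 + 1), AA q κ m s * BB p n s
      + q * ∑ s ∈ Finset.range (n + 1 + 1), AA q κ m s * BB p (n+1) s := by
  set X := ∑ s ∈ Finset.range (n + 1), AA q κ m (s+1) * BB p n (s+1) with hX
  set Y := ∑ s ∈ Finset.range (n + 1), AA q κ m (s+1) * BB p n s with hY
  set Z := ∑ s ∈ Finset.range (n + 1), AA q κ m s * BB p n (s+1) with hZ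
  set W := ∑ s ∈ Finset.range (n + 1), AA q κ m s * BB p n s with hW
  have hpt1 : ∀ s ∈ Finset.range (n+1), AA q κ (m+1) (s+1) * BB p (n+1) (s+1)
      = p*q*(AA q κ m (s+1) * BB p n (s+1)) + (1-p)*q*(AA q κ m (s+1) * BB p n s)
        + (p*(1-q)*(AA q κ m s * BB p n (s+1)) + (1-p)*(1-q)*(AA q κ m s * BB p n s)) := by
    intro s _
    rw [BB_rec, AA_rec q κ hq1]
    ring
  have hpt2 : ∀ s ∈ Finset.range (n+1), AA q κ (m+1) (s+1) * BB p n (s+1)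
      = q*(AA q κ m (s+1) * BB p n (s+1)) + (1-q)*(AA q κ m s * BB p n (s+1)) := by
    intro s _
    rw [AA_rec q κ hq1]
    ring
  have hpt4 : ∀ s ∈ Finset.range (n+1), AA q κ m (s+1) * BB p (n+1) (s+1)
      = p*(AA q κ m (s+1) * BB p n (s+1)) + (1-p)*(AA q κ m (s+1) * BB p n s) := by
    intro s _
    rw [BB_rec]
    ring
  have e1 : ∑ s ∈ Finset.range (n + 1 + 1), AA q κ (m+1) s * BB p (n+1) s
      = (p*q*X + (1-p)*q*Y + (p*(1-q)*Z + (1-p)*(1-q)*W))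
        + AA q κ (m+1) 0 * (p * BB p n 0) := by
    rw [Finset.sum_range_succ', Finset.sum_congr rfl hpt1, Finset.sum_add_distrib,
      Finset.sum_add_distrib, Finset.sum_add_distrib,
      ← Finset.mul_sum, ← Finset.mul_sum, ← Finset.mul_sum, ← Finset.mul_sum, BB_rec0]
  have e2 : ∑ s ∈ Finset.range (n + 1 + 1), AA q κ (m+1) s * BB p n s
      = (q*X + (1-q)*Z) + AA q κ (m+1) 0 * BB p n 0 := by
    rw [Finset.sum_range_succ', Finset.sum_congr rfl hpt2, Finset.sum_add_distrib,
      ← Finset.mul_sum, ← Finset.mul_sum]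
  have e3 : ∑ s ∈ Finset.range (n + 1 + 1), AA q κ m s * BB p n s = W := by
    rw [Finset.sum_range_succ, BB_zero p (by omega : n < n + 1)]
    simp [hW]
  have e4 : ∑ s ∈ Finset.range (n + 1 + 1), AA q κ m s * BB p (n+1) s
      = (p*X + (1-p)*Y) + AA q κ m 0 * (p * BB p n 0) := by
    rw [Finset.sum_range_succ', Finset.sum_congr rfl hpt4, Finset.sum_add_distrib,
      ← Finset.mul_sum, ← Finset.mul_sum, BB_rec0]
  have tele : W - X = AA q κ m 0 * BB p n 0 := by
    have h : W - X = ∑ s ∈ Finset.range (n + 1),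
        (AA q κ m s * BB p n s - AA q κ m (s+1) * BB p n (s+1)) := by
      rw [Finset.sum_sub_distrib]
    rw [h, Finset.sum_range_sub' (fun s => AA q κ m s * BB p n s),
      BB_zero p (by omega : n < n + 1)]
    ring
  rw [e1, e2, e3, e4]
  linear_combination (p*q) * tele

/-- transition probability recurrence, duplication case:
`w(m|0) = C(κ+m-1, m)(1-q)^κ q^m` and, for `n > 0`,
`w(m|n) = p·w(m|n-1) + [m>0]·(1-p-q)·w(m-1|n-1) + [m>0]·q·w(m-1|n)`. -/
theorem stmt14 (p q κ : ℝ) (hp0 : 0 < p) (hp1 : p < 1) (hq0 : 0 < q)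
    (hq1 : q < 1) (hκ : 0 < κ) :
    (∀ m : ℕ, w p q κ m 0 = gbc (κ + m - 1) m * (1 - q) ^ κ * q ^ m) ∧
    (∀ m n : ℕ, 0 < n →
      w p q κ m n = p * w p q κ m (n - 1) +
        (if 0 < m then
            (1 - p - q) * w p q κ (m - 1) (n - 1) + q * w p q κ (m - 1) n
          else 0)) := by
  constructor
  · intro m
    simp [w]
  · intro m n hn
    obtain ⟨n', rfl⟩ : ∃ n', n = n' + 1 := ⟨n - 1, by omega⟩
    cases m with
    | zero =>
      rw [if_neg (by omega)]
      simp only [Nat.add_sub_cancel, add_zero]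
      simp [w, pow_succ]
      ring
    | succ m' =>
      rw [if_pos (by omega)]
      simp only [Nat.add_sub_cancel]
      rw [w_eq p q κ (m'+1) (n'+1) (n'+1) le_rfl,
        w_eq p q κ (m'+1) n' (n'+1) (by omega),
        w_eq p q κ m' n' (n'+1) (by omega),
        w_eq p q κ m' (n'+1) (n'+1) le_rfl]
      linear_combination key p q κ hq1 m' n'
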